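/- Let α > −1 and let l > 0 be a real number. Define, for r > 0, F₁(r) = ((l/(1+α)+1)·r^l + (l/(1+α)−1)·r^{l+2(1+α)})/(1+r^{2(1+α)}) and F₂(r) = ((l/(1+α)+1)·r^{−l+2(1+α)} + (l/(1+α)−1)·r^{−l})/(1+r^{2(1+α)}). Then both F₁ and F₂ satisfy the homogeneous equation F''(r) + F'(r)/r + (8(1+α)² r^{2α}(1+r^{2+2α})^{−2} − l²/r²) F(r) = 0 for every r > 0. -/

import Mathlib

/-!
With `κ = 1 + α`, on `(0, ∞)` we have `F₁ = φ_l` and `F₂ = -φ_{-l}` for the modes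
`φ_m(r) = ((m/κ + 1) r^m + (m/κ - 1) r^(m + 2κ)) / (1 + r^(2κ))`. The equation is linear and sees
the frequency only through `m ^ 2`, so it suffices that every `φ_m` solves it. That is a direct
computation: `φ_m'` has a closed form, and differentiating it once more gives the equation.
-/

open Real Filter Set

noncomputable def radialMode (κ m r : ℝ) : ℝ :=
  ((m / κ + 1) * r ^ m + (m / κ - 1) * r ^ (m + 2 * κ)) / (1 + r ^ (2 * κ))

noncomputable def radialModeDeriv (κ m r : ℝ) : ℝ :=
  r ^ m * (m * (m / κ + 1 + (m / κ - 1) * r ^ (2 * κ)) * (1 + r ^ (2 * κ)) - 4 * κ * r ^ (2 * κ))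
    / (r * (1 + r ^ (2 * κ)) ^ 2)

lemma hasDerivAt_rpow_const_of_pos {r : ℝ} (hr : 0 < r) (a : ℝ) :
    HasDerivAt (fun s : ℝ => s ^ a) (a * r ^ a / r) r := by
  simpa only [Real.rpow_sub_one hr.ne', mul_div_assoc] using
    Real.hasDerivAt_rpow_const (p := a) (Or.inl hr.ne')

variable {κ : ℝ} (m : ℝ) {r : ℝ}

lemma hasDerivAt_radialMode (hr : 0 < r) :
    HasDerivAt (radialMode κ m) (radialModeDeriv κ m r) r := by
  have ht := hasDerivAt_rpow_const_of_pos hr (2 * κ)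
  have hN := ((hasDerivAt_rpow_const_of_pos hr m).const_mul (m / κ + 1)).add
    ((hasDerivAt_rpow_const_of_pos hr (m + 2 * κ)).const_mul (m / κ - 1))
  have ht0 : 0 < r ^ (2 * κ) := rpow_pos_of_pos hr _
  refine (hN.div (ht.const_add 1) (by positivity)).congr_deriv ?_
  simp only [Pi.add_apply]
  rw [radialModeDeriv, rpow_add hr]
  field_simp
  ring

/-- The radial equation, solved for the second derivative. -/
lemma hasDerivAt_radialModeDeriv (hκ : κ ≠ 0) (hr : 0 < r) :
    HasDerivAt (radialModeDeriv κ m)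
      (-(radialModeDeriv κ m r / r)
        - (8 * κ ^ 2 * r ^ (2 * κ - 2) / (1 + r ^ (2 * κ)) ^ 2 - m ^ 2 / r ^ 2)
          * radialMode κ m r) r := by
  have ht := hasDerivAt_rpow_const_of_pos hr (2 * κ)
  have hP := ((((ht.const_mul (m / κ - 1)).const_add (m / κ + 1)).const_mul m).mul
    (ht.const_add 1)).sub (ht.const_mul (4 * κ))
  have hD := (hasDerivAt_id r).mul ((ht.const_add 1).pow 2)
  have ht0 : 0 < r ^ (2 * κ) := rpow_pos_of_pos hr _
  refine (((hasDerivAt_rpow_const_of_pos hr m).mul hP).div hD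
    (by simp only [Pi.mul_apply, Pi.pow_apply, id]; positivity)).congr_deriv ?_
  simp only [Pi.mul_apply, Pi.sub_apply, Pi.pow_apply, id]
  rw [radialModeDeriv, radialMode, rpow_sub hr, rpow_two, rpow_add hr]
  field_simp
  ring

theorem radialMode_ode {F : ℝ → ℝ} (C : ℝ) (hκ : κ ≠ 0)
    (hF : ∀ s, 0 < s → F s = C * radialMode κ m s) (hr : 0 < r) :
    deriv (deriv F) r + deriv F r / r
      + (8 * κ ^ 2 * r ^ (2 * κ - 2) / (1 + r ^ (2 * κ)) ^ 2 - m ^ 2 / r ^ 2) * F r = 0 := by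
  have hF' : ∀ s, 0 < s → HasDerivAt F (C * radialModeDeriv κ m s) s := fun s hs =>
    ((hasDerivAt_radialMode m hs).const_mul C).congr_of_eventuallyEq
      (eventually_of_mem (Ioi_mem_nhds hs) hF)
  have hF'' := ((hasDerivAt_radialModeDeriv m hκ hr).const_mul C).congr_of_eventuallyEq
    (f₁ := deriv F) (eventually_of_mem (Ioi_mem_nhds hr) fun s hs => (hF' s hs).deriv)
  rw [hF''.deriv, (hF' r hr).deriv, hF r hr]
  ring

theorem stmt5 (α : ℝ) (hα : α > -1) (l : ℝ) (F₁ F₂ : ℝ → ℝ)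
    (hF₁ : ∀ r : ℝ, 0 < r →
      F₁ r = ((l / (1 + α) + 1) * r ^ l + (l / (1 + α) - 1) * r ^ (l + 2 * (1 + α)))
              / (1 + r ^ (2 * (1 + α))))
    (hF₂ : ∀ r : ℝ, 0 < r →
      F₂ r = ((l / (1 + α) + 1) * r ^ (-l + 2 * (1 + α)) + (l / (1 + α) - 1) * r ^ (-l))
              / (1 + r ^ (2 * (1 + α)))) :
    ∀ r : ℝ, 0 < r →
      (deriv (deriv F₁) r + deriv F₁ r / r
        + (8 * (1 + α) ^ 2 * r ^ (2 * α) / (1 + r ^ (2 + 2 * α)) ^ 2 - l ^ 2 / r ^ 2)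
          * F₁ r = 0) ∧
      (deriv (deriv F₂) r + deriv F₂ r / r
        + (8 * (1 + α) ^ 2 * r ^ (2 * α) / (1 + r ^ (2 + 2 * α)) ^ 2 - l ^ 2 / r ^ 2)
          * F₂ r = 0) := by
  intro r hr
  have hκ : 1 + α ≠ 0 := by linarith
  rw [show 2 + 2 * α = 2 * (1 + α) by ring, show 2 * α = 2 * (1 + α) - 2 by ring]
  constructor
  · exact radialMode_ode l 1 hκ (fun s hs => by rw [hF₁ s hs, radialMode, one_mul]) hr
  · rw [← neg_sq l]
    exact radialMode_ode (F := F₂) (-l) (-1) hκ (fun s hs => by rw [hF₂ s hs, radialMode]; ring) hr
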